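/- arXiv:math/0111298 — 5 statements merged into one kernel-verified Lean document; each statement's English description precedes it below -/
import Mathlib

section
/- For coprime positive integers h and k, the classical Dedekind sums satisfy the reciprocity law s(h,k) + s(k,h) = −1/4 + (h² + k² + 1)/(12hk). -/
open scoped Classical

/-- The Dedekind symbol `((x))`. -/
noncomputable def dedekindSymbol (x : ℝ) : ℝ :=
  if ∃ n : ℤ, x = (n : ℝ) then 0 else Int.fract x - 1/2

/-- The classical Dedekind sum `s(h,k)`. -/
noncomputable def dedekindSum (h k : ℕ) : ℝ :=
  ∑ μ ∈ Finset.range k,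
    dedekindSymbol ((μ : ℝ) / (k : ℝ)) * dedekindSymbol ((h : ℝ) * (μ : ℝ) / (k : ℝ))

/-!
For `0 < μ < k` the summand of `s(h,k)` is `(μ/k - 1/2)(r_μ/k - 1/2)` with `r_μ = hμ mod k`, and
`μ ↦ r_μ` permutes the residues mod `k`; hence `s(h,k)` is an explicit rational function of `h, k`
minus `A(h,k)/k`, where `A(h,k) = ∑ μ ⌊hμ/k⌋` is `weightedFloorSum h k`. Substituting
`r_μ = hμ - k⌊hμ/k⌋` into `∑ r_μ² = ∑ μ²` expresses `A(h,k)` through `∑ ⌊hμ/k⌋²`, and counting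
lattice points of the rectangle `[0,k) × [0,h)` on either side of the line `kν = hμ` (none lies on
it, by coprimality) turns that sum into `A(k,h)`. The resulting relation
`12 (h A(h,k) + k A(k,h)) = (h-1)(k-1)(8hk - h - k - 1)` is the reciprocity law.
-/

open Finset

theorem sum_range_natCast_mul_two {R : Type*} [CommRing R] (n : ℕ) :
    (∑ i ∈ range n, (i : R)) * 2 = n * (n - 1) := by
  induction n with
  | zero => simp
  | succ n ih => rw [sum_range_succ, add_mul, ih]; push_cast; ring

theorem sum_range_natCast_sq_mul_six {R : Type*} [CommRing R] (n : ℕ) :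
    (∑ i ∈ range n, (i : R) ^ 2) * 6 = n * (n - 1) * (2 * n - 1) := by
  induction n with
  | zero => simp
  | succ n ih => rw [sum_range_succ, add_mul, ih]; push_cast; ring

theorem sum_range_comp_mul_mod {M : Type*} [AddCommMonoid M] {h k : ℕ} (hcop : h.Coprime k)
    (g : ℕ → M) : ∑ μ ∈ range k, g (h * μ % k) = ∑ μ ∈ range k, g μ := by
  rcases Nat.eq_zero_or_pos k with rfl | hk
  · simp
  have hmaps : Set.MapsTo (fun μ ↦ h * μ % k) (range k) (range k) :=
    fun μ _ ↦ mem_range.2 (Nat.mod_lt _ hk)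
  have hinj : Set.InjOn (fun μ ↦ h * μ % k) (range k) := by
    intro x hx y hy hxy
    have hxy' := Nat.ModEq.cancel_left_of_coprime (Nat.coprime_comm.1 hcop) hxy
    rwa [Nat.ModEq, Nat.mod_eq_of_lt (mem_range.1 hx), Nat.mod_eq_of_lt (mem_range.1 hy)] at hxy'
  exact sum_nbij _ hmaps hinj (surjOn_of_injOn_of_card_le _ hmaps hinj le_rfl) fun _ _ ↦ rfl

theorem dedekindSymbol_natCast_div_natCast {a k : ℕ} (hk : 0 < k) (ha : ¬ k ∣ a) :
    dedekindSymbol (a / k) = (a % k : ℕ) / k - 1 / 2 := by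
  have hfract : Int.fract ((a : ℝ) / k) = (a % k : ℕ) / k :=
    Int.fract_div_natCast_eq_div_natCast_mod
  rw [dedekindSymbol, if_neg, hfract]
  rintro ⟨n, hn⟩
  rw [hn, Int.fract_intCast, eq_comm, div_eq_zero_iff] at hfract
  exact ha (Nat.dvd_of_mod_eq_zero (by exact_mod_cast hfract.resolve_right (by positivity)))

theorem dedekindSum_eq_sum_mul_mod {h k : ℕ} (hk : 0 < k) (hcop : h.Coprime k) :
    dedekindSum h k = (∑ μ ∈ range k, (μ : ℝ) * (h * μ % k : ℕ)) / k ^ 2 - (k - 1) / 4 := by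
  -- The `μ = 0` summand is `0`, not the `1/4` that the sawtooth formula would give.
  have hterm : ∀ μ ∈ range k,
      dedekindSymbol (μ / k) * dedekindSymbol (h * μ / k) =
        ((μ : ℝ) / k - 1 / 2) * ((h * μ % k : ℕ) / k - 1 / 2) - if μ = 0 then 1 / 4 else 0 := by
    intro μ hμ
    rcases eq_or_ne μ 0 with rfl | hμ0
    · have hzero : dedekindSymbol 0 = 0 := if_pos ⟨0, Int.cast_zero.symm⟩
      norm_num [hzero]
    have hμk : μ < k := mem_range.1 hμ
    have hndvd : ¬ k ∣ μ := Nat.not_dvd_of_pos_of_lt (Nat.pos_of_ne_zero hμ0) hμk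
    rw [if_neg hμ0, sub_zero, ← Nat.cast_mul, dedekindSymbol_natCast_div_natCast hk hndvd,
      dedekindSymbol_natCast_div_natCast hk (hndvd ∘ hcop.symm.dvd_of_dvd_mul_left),
      Nat.mod_eq_of_lt hμk]
  have hmod : ∑ μ ∈ range k, ((h * μ % k : ℕ) : ℝ) = ∑ μ ∈ range k, (μ : ℝ) :=
    sum_range_comp_mul_mod hcop _
  have hk0 : (k : ℝ) ≠ 0 := by positivity
  have hexpand : ∑ μ ∈ range k, ((μ : ℝ) / k - 1 / 2) * ((h * μ % k : ℕ) / k - 1 / 2) =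
      ∑ μ ∈ range k, ((μ : ℝ) * (h * μ % k : ℕ) / k ^ 2 - ((μ : ℝ) + (h * μ % k : ℕ)) / (2 * k)
        + 1 / 4) :=
    sum_congr rfl fun μ _ ↦ by field_simp; ring
  rw [dedekindSum, sum_congr rfl hterm, sum_sub_distrib, sum_ite_eq' (range k) 0,
    if_pos (mem_range.2 hk), hexpand, sum_add_distrib, sum_sub_distrib, ← sum_div, ← sum_div,
    sum_add_distrib, hmod, sum_const, card_range, nsmul_eq_mul]
  field_simp
  linear_combination (-4 * (k : ℝ)) * sum_range_natCast_mul_two (R := ℝ) k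

def weightedFloorSum (h k : ℕ) : ℕ := ∑ μ ∈ range k, μ * (h * μ / k)

theorem sum_mul_mod_add_weightedFloorSum (h k : ℕ) :
    ∑ μ ∈ range k, μ * (h * μ % k) + k * weightedFloorSum h k = h * ∑ μ ∈ range k, μ ^ 2 := by
  rw [weightedFloorSum, mul_sum, mul_sum, ← sum_add_distrib]
  refine sum_congr rfl fun μ _ ↦ ?_
  calc μ * (h * μ % k) + k * (μ * (h * μ / k)) = μ * (h * μ % k + k * (h * μ / k)) := by ring
    _ = h * μ ^ 2 := by rw [Nat.mod_add_div]; ring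

theorem dedekindSum_eq {h k : ℕ} (hk : 0 < k) (hcop : h.Coprime k) :
    dedekindSum h k =
      h * (k - 1) * (2 * k - 1) / (6 * k) - weightedFloorSum h k / k - (k - 1) / 4 := by
  have hsum := congrArg (Nat.cast (R := ℝ)) (sum_mul_mod_add_weightedFloorSum h k)
  push_cast at hsum
  rw [dedekindSum_eq_sum_mul_mod hk hcop]
  field_simp
  linear_combination 24 * hsum + 4 * (h : ℝ) * sum_range_natCast_sq_mul_six (R := ℝ) k

theorem filter_range_mul_le_mul_eq_range {h k μ : ℕ} (hh : 0 < h) (hμ : μ < k) :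
    {ν ∈ range h | k * ν ≤ h * μ} = range (h * μ / k + 1) := by
  have hk : 0 < k := Nat.zero_lt_of_lt hμ
  have hle (ν : ℕ) : ν ≤ h * μ / k ↔ k * ν ≤ h * μ := by rw [Nat.le_div_iff_mul_le hk, mul_comm]
  have hq : h * μ / k < h := (Nat.div_lt_iff_lt_mul hk).2 (by gcongr)
  ext ν
  simp only [mem_filter, mem_range, Nat.lt_succ_iff, hle]
  exact ⟨And.right, fun hν ↦ ⟨((hle ν).2 hν).trans_lt hq, hν⟩⟩

theorem filter_range_mul_lt_mul_eq_range {h k ν : ℕ} (hcop : h.Coprime k) (hν : 0 < ν)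
    (hνh : ν < h) : {μ ∈ range k | h * μ < k * ν} = range (k * ν / h + 1) := by
  have hne (μ : ℕ) : h * μ ≠ k * ν := fun heq ↦
    Nat.not_dvd_of_pos_of_lt hν hνh (hcop.dvd_of_dvd_mul_left ⟨μ, heq.symm⟩)
  have hk : 0 < k := Nat.pos_of_ne_zero fun hk0 ↦ hne 0 (by simp [hk0])
  have hh : 0 < h := hν.trans hνh
  have hle (μ : ℕ) : μ ≤ k * ν / h ↔ h * μ ≤ k * ν := by rw [Nat.le_div_iff_mul_le hh, mul_comm]
  have hq : k * ν / h < k := (Nat.div_lt_iff_lt_mul hh).2 (by gcongr)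
  ext μ
  simp only [mem_filter, mem_range, Nat.lt_succ_iff, hle]
  exact ⟨fun hμ ↦ hμ.2.le, fun hμ ↦ ⟨((hle μ).2 hμ).trans_lt hq, hμ.lt_of_ne (hne μ)⟩⟩

-- Sum `ν` over the lattice points `(μ, ν) ∈ [0,k) × [0,h)` on either side of the line `kν = hμ`.
theorem sum_sum_range_div_succ_add_weightedFloorSum {h k : ℕ} (hcop : h.Coprime k) :
    ∑ μ ∈ range k, ∑ ν ∈ range (h * μ / k + 1), ν + (weightedFloorSum k h + ∑ ν ∈ range h, ν) =
      k * ∑ ν ∈ range h, ν := by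
  rcases Nat.eq_zero_or_pos h with rfl | hh
  · obtain rfl : k = 1 := Nat.coprime_zero_left k |>.1 hcop
    simp [weightedFloorSum]
  have habove : ∀ ν ∈ range h, #{μ ∈ range k | h * μ < k * ν} * ν = (k * ν / h + 1) * ν := by
    intro ν hν
    rcases Nat.eq_zero_or_pos ν with rfl | hν0
    · simp
    rw [filter_range_mul_lt_mul_eq_range hcop hν0 (mem_range.1 hν), card_range]
  calc ∑ μ ∈ range k, ∑ ν ∈ range (h * μ / k + 1), ν + (weightedFloorSum k h + ∑ ν ∈ range h, ν)
      = ∑ μ ∈ range k, ∑ ν ∈ range h with k * ν ≤ h * μ, ν +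
          ∑ ν ∈ range h, #{μ ∈ range k | h * μ < k * ν} * ν := by
        rw [sum_congr rfl habove, weightedFloorSum, ← sum_add_distrib]
        congr 1
        · exact sum_congr rfl fun μ hμ ↦ by
            rw [filter_range_mul_le_mul_eq_range hh (mem_range.1 hμ)]
        · exact sum_congr rfl fun ν _ ↦ by ring
      _ = ∑ μ ∈ range k, (∑ ν ∈ range h with k * ν ≤ h * μ, ν +
            ∑ ν ∈ range h with ¬ k * ν ≤ h * μ, ν) := by
        simp only [sum_add_distrib, not_le, ← smul_eq_mul, ← sum_const, sum_filter]
        rw [sum_comm (s := range h)]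
      _ = k * ∑ ν ∈ range h, ν := by
        simp only [sum_filter_add_sum_filter_not, sum_const, card_range, smul_eq_mul]

theorem weightedFloorSum_reciprocity {h k : ℕ} (hk : 0 < k) (hcop : h.Coprime k) :
    12 * ((h : ℤ) * weightedFloorSum h k + k * weightedFloorSum k h) =
      (h - 1) * (k - 1) * (8 * h * k - h - k - 1) := by
  set q : ℕ → ℤ := fun μ ↦ ((h * μ / k : ℕ) : ℤ) with hq
  have hmod (μ : ℕ) : ((h * μ % k : ℕ) : ℤ) = h * μ - k * q μ := by
    have hdiv := congrArg (Nat.cast (R := ℤ)) (Nat.mod_add_div (h * μ) k)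
    simp only [Nat.cast_add, Nat.cast_mul] at hdiv
    exact eq_sub_of_add_eq hdiv
  have hA : (weightedFloorSum h k : ℤ) = ∑ μ ∈ range k, (μ : ℤ) * q μ := by
    simp only [weightedFloorSum, Nat.cast_sum, Nat.cast_mul, hq]
  have hsq : h ^ 2 * ∑ μ ∈ range k, (μ : ℤ) ^ 2 - 2 * h * k * ∑ μ ∈ range k, (μ : ℤ) * q μ
      + k ^ 2 * ∑ μ ∈ range k, q μ ^ 2 = ∑ μ ∈ range k, (μ : ℤ) ^ 2 := by
    conv_rhs => rw [← sum_range_comp_mul_mod hcop (fun n ↦ (n : ℤ) ^ 2)]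
    rw [mul_sum, mul_sum, mul_sum, ← sum_sub_distrib, ← sum_add_distrib]
    exact sum_congr rfl fun μ _ ↦ by rw [hmod]; ring
  have hlin : h * ∑ μ ∈ range k, (μ : ℤ) - k * ∑ μ ∈ range k, q μ = ∑ μ ∈ range k, (μ : ℤ) := by
    conv_rhs => rw [← sum_range_comp_mul_mod hcop (fun n ↦ (n : ℤ))]
    rw [mul_sum, mul_sum, ← sum_sub_distrib]
    exact sum_congr rfl fun μ _ ↦ (hmod μ).symm
  have hlattice := congrArg (Nat.cast (R := ℤ)) (sum_sum_range_div_succ_add_weightedFloorSum hcop)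
  simp only [Nat.cast_add, Nat.cast_mul, Nat.cast_sum] at hlattice
  have htriangle : (∑ μ ∈ range k, ∑ ν ∈ range (h * μ / k + 1), (ν : ℤ)) * 2 =
      ∑ μ ∈ range k, q μ ^ 2 + ∑ μ ∈ range k, q μ := by
    rw [sum_mul, ← sum_add_distrib]
    exact sum_congr rfl fun μ _ ↦ by
      rw [sum_range_natCast_mul_two]; simp only [Nat.cast_add, Nat.cast_one, hq]; ring
  -- `hsq` determines only `2hk · A(h,k)`, so the relation is first proved multiplied by `k`.
  refine mul_left_cancel₀ (show (k : ℤ) ≠ 0 by positivity) ?_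
  rw [hA]
  linear_combination -6 * hsq - 6 * (k : ℤ) ^ 2 * htriangle + 12 * (k : ℤ) ^ 2 * hlattice
    + 6 * (k : ℤ) * hlin + ((h : ℤ) ^ 2 - 1) * sum_range_natCast_sq_mul_six (R := ℤ) k
    - 3 * (k : ℤ) * (h - 1) * sum_range_natCast_mul_two (R := ℤ) k
    + 6 * (k : ℤ) ^ 2 * (k - 1) * sum_range_natCast_mul_two (R := ℤ) h

theorem dedekind_reciprocity (h k : ℕ) (hh : 0 < h) (hk : 0 < k)
    (hcop : Nat.Coprime h k) :
    dedekindSum h k + dedekindSum k h =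
      -1/4 + ((h : ℝ)^2 + (k : ℝ)^2 + 1) / (12 * (h : ℝ) * (k : ℝ)) := by
  have hfloor : 12 * ((h : ℝ) * weightedFloorSum h k + k * weightedFloorSum k h) =
      (h - 1) * (k - 1) * (8 * h * k - h - k - 1) := by
    exact_mod_cast weightedFloorSum_reciprocity hk hcop
  rw [dedekindSum_eq hk hcop, dedekindSum_eq hh hcop.symm]
  field_simp
  linear_combination -24 * hfloor
end

section
/- For integers p > 1 and t, (1/p) · Σ' ζ^t/(1−ζ) = (( (2t−1)/(2p) )), where the primed sum runs over all p-th roots of unity ζ ≠ 1 in ℂ. -/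
open scoped Classical

/-- The set of `p`-th roots of unity in `ℂ` different from `1`. -/
noncomputable def nontrivialRootsOfUnity (p : ℕ) : Finset ℂ :=
  (Polynomial.nthRoots p (1 : ℂ)).toFinset.erase 1

/-!
Let `S r = ∑' ζ ^ r / (1 - ζ)`. Since `ζ ^ r / (1 - ζ) - ζ ^ (r + 1) / (1 - ζ) = ζ ^ r`, and
`∑' ζ ^ r` is `-1` when `p ∤ r`, the sum grows by one at each step `r → r + 1` with `p ∤ r`.
Pairing `ζ` with `ζ⁻¹`, for which `1 / (1 - ζ) + 1 / (1 - ζ⁻¹) = 1`, gives `2 S 0 = p - 1`. Hence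
`2 S (r + 1) = 2 r + 1 - p` for `0 ≤ r < p`, and dividing by `2 p` gives `x - 1/2` at
`x = (2 r + 1) / (2 p) ∈ (0, 1)`. Both sides are `p`-periodic in `t`.
-/

open Finset Polynomial

lemma zpow_eq_zpow_of_modEq {K : Type*} [GroupWithZero K] {ζ : K} {p : ℕ} (hζ : ζ ^ p = 1)
    {a b : ℤ} (hab : a ≡ b [ZMOD p]) : ζ ^ a = ζ ^ b := by
  rcases eq_or_ne ζ 0 with rfl | hζ0
  · obtain rfl : p = 0 := zero_pow_eq_one₀.1 hζ
    rw [Int.natCast_zero, Int.modEq_zero_iff] at hab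
    rw [hab]
  obtain ⟨k, hk⟩ := hab.dvd
  rw [show b = a + p * k by omega, zpow_add₀ hζ0, zpow_mul, zpow_natCast, hζ, one_zpow, mul_one]

lemma one_div_one_sub_add_one_div_one_sub_inv {K : Type*} [Field K] {ζ : K} (hζ0 : ζ ≠ 0)
    (hζ1 : ζ ≠ 1) : 1 / (1 - ζ) + 1 / (1 - ζ⁻¹) = 1 := by
  have : 1 - ζ ≠ 0 := sub_ne_zero.2 (Ne.symm hζ1)
  have : ζ - 1 ≠ 0 := sub_ne_zero.2 hζ1
  field_simp
  ring

lemma sum_pow_succ_div_one_sub {K : Type*} [Field K] {s : Finset K} (hs : 1 ∉ s) (r : ℕ) :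
    ∑ ζ ∈ s, ζ ^ (r + 1) / (1 - ζ) = ∑ ζ ∈ s, ζ ^ r / (1 - ζ) - ∑ ζ ∈ s, ζ ^ r := by
  rw [← sum_sub_distrib]
  refine sum_congr rfl fun ζ hζ => ?_
  have : 1 - ζ ≠ 0 := sub_ne_zero.2 (ne_of_mem_of_not_mem hζ hs).symm
  field_simp
  ring

namespace IsPrimitiveRoot

variable {K : Type*} [Field K] {μ : K} {p : ℕ}

lemma sum_nthRootsFinset_pow_eq_zero (hμ : IsPrimitiveRoot μ p) {j : ℕ} (hj : ¬p ∣ j) :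
    ∑ ζ ∈ nthRootsFinset p (1 : K), ζ ^ j = 0 := by
  rcases p.eq_zero_or_pos with rfl | hp
  · simp
  -- multiplication by `μ` permutes the `p`-th roots of unity
  have hrot : μ ^ j * ∑ ζ ∈ nthRootsFinset p (1 : K), ζ ^ j =
      ∑ ζ ∈ nthRootsFinset p (1 : K), ζ ^ j := by
    rw [mul_sum]
    refine sum_equiv (Equiv.mulLeft₀ μ (hμ.ne_zero hp.ne')) (fun ζ => ?_)
      (fun ζ _ => (mul_pow μ ζ j).symm)
    simp [Polynomial.mem_nthRootsFinset hp, mul_pow, hμ.pow_eq_one]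
  by_contra hS
  exact hj ((hμ.pow_eq_one_iff_dvd j).1 ((mul_eq_right₀ hS).1 hrot))

lemma sum_nthRootsFinset_erase_one_pow (hμ : IsPrimitiveRoot μ p) (hp : 0 < p) {j : ℕ}
    (hj : ¬p ∣ j) : ∑ ζ ∈ (nthRootsFinset p (1 : K)).erase 1, ζ ^ j = -1 := by
  rw [sum_erase_eq_sub (one_mem_nthRootsFinset hp), hμ.sum_nthRootsFinset_pow_eq_zero hj, one_pow,
    zero_sub]

lemma card_nthRootsFinset_erase_one (hμ : IsPrimitiveRoot μ p) (hp : 0 < p) :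
    #((nthRootsFinset p (1 : K)).erase 1) = p - 1 := by
  rw [card_erase_of_mem (one_mem_nthRootsFinset hp), hμ.card_nthRootsFinset]

lemma two_mul_sum_nthRootsFinset_erase_one_one_div (hμ : IsPrimitiveRoot μ p) (hp : 0 < p) :
    2 * ∑ ζ ∈ (nthRootsFinset p (1 : K)).erase 1, 1 / (1 - ζ) = p - 1 := by
  set E := (nthRootsFinset p (1 : K)).erase 1
  have hinv : ∑ ζ ∈ E, 1 / (1 - ζ⁻¹) = ∑ ζ ∈ E, 1 / (1 - ζ) :=
    sum_equiv (Equiv.inv K) (fun ζ => by simp [E, Polynomial.mem_nthRootsFinset hp])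
      (fun _ _ => rfl)
  have hpair : ∀ ζ ∈ E, 1 / (1 - ζ) + 1 / (1 - ζ⁻¹) = 1 := fun ζ hζ =>
    one_div_one_sub_add_one_div_one_sub_inv
      (ne_zero_of_mem_nthRootsFinset one_ne_zero (mem_of_mem_erase hζ)) (ne_of_mem_erase hζ)
  rw [two_mul, ← Nat.cast_pred hp, ← hμ.card_nthRootsFinset_erase_one hp, card_eq_sum_ones,
    Nat.cast_sum, Nat.cast_one, ← sum_congr rfl hpair, sum_add_distrib, hinv]

lemma two_mul_sum_nthRootsFinset_erase_one_pow_succ_div (hμ : IsPrimitiveRoot μ p) {r : ℕ}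
    (hr : r < p) :
    2 * ∑ ζ ∈ (nthRootsFinset p (1 : K)).erase 1, ζ ^ (r + 1) / (1 - ζ) = 2 * r + 1 - p := by
  have hp : 0 < p := r.zero_le.trans_lt hr
  have hstep := sum_pow_succ_div_one_sub (notMem_erase 1 (nthRootsFinset p (1 : K)))
  induction r with
  | zero =>
    rw [hstep]
    simp only [pow_zero, sum_const, nsmul_one]
    rw [mul_sub, hμ.two_mul_sum_nthRootsFinset_erase_one_one_div hp,
      hμ.card_nthRootsFinset_erase_one hp, Nat.cast_pred hp]
    push_cast
    ring
  | succ r ih =>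
    rw [hstep, mul_sub, ih (by omega), hμ.sum_nthRootsFinset_erase_one_pow hp
      (Nat.not_dvd_of_pos_of_lt r.succ_pos hr)]
    push_cast
    ring

lemma two_mul_sum_nthRootsFinset_erase_one_zpow_div (hμ : IsPrimitiveRoot μ p) (hp : 0 < p)
    (t : ℤ) :
    2 * ∑ ζ ∈ (nthRootsFinset p (1 : K)).erase 1, ζ ^ t / (1 - ζ) =
      2 * ((t - 1) % p : ℤ) + 1 - p := by
  have hpZ : (0 : ℤ) < p := by exact_mod_cast hp
  obtain ⟨r, hr⟩ := Int.eq_ofNat_of_zero_le (Int.emod_nonneg (t - 1) hpZ.ne')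
  have hrp : r < p := by have := Int.emod_lt_of_pos (t - 1) hpZ; omega
  have hreduce : ∀ ζ ∈ (nthRootsFinset p (1 : K)).erase 1, ζ ^ t = ζ ^ (r + 1) := by
    intro ζ hζ
    refine (zpow_eq_zpow_of_modEq ((Polynomial.mem_nthRootsFinset hp 1).1 (mem_of_mem_erase hζ))
      ?_).trans (zpow_natCast ζ (r + 1))
    have := (Int.mod_modEq (t - 1) p).symm.add_right 1
    rw [hr, sub_add_cancel] at this
    exact_mod_cast this
  rw [sum_congr rfl fun ζ hζ => by rw [hreduce ζ hζ],
    hμ.two_mul_sum_nthRootsFinset_erase_one_pow_succ_div hrp, hr]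
  push_cast
  ring

end IsPrimitiveRoot

lemma dedekindSymbol_eq_of_lt_of_lt {x : ℝ} {n : ℤ} (hn : n < x) (hx : x < n + 1) :
    dedekindSymbol x = x - n - 1 / 2 := by
  have hfloor : ⌊x⌋ = n := Int.floor_eq_iff.2 ⟨hn.le, hx⟩
  have hnotInt : ¬∃ m : ℤ, x = m := by
    rintro ⟨m, rfl⟩
    rw [Int.floor_intCast] at hfloor
    exact hn.ne (by rw [hfloor])
  rw [dedekindSymbol, if_neg hnotInt, Int.fract, hfloor]

lemma nontrivialRootsOfUnity_eq_erase (p : ℕ) :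
    nontrivialRootsOfUnity p = (nthRootsFinset p (1 : ℂ)).erase 1 := by
  rw [nontrivialRootsOfUnity, nthRootsFinset_def]

lemma dedekindSymbol_two_mul_sub_one_div {p : ℕ} (hp : 0 < p) (t : ℤ) :
    dedekindSymbol ((2 * (t : ℝ) - 1) / (2 * p)) =
      (2 * ((t - 1) % p : ℤ) + 1) / (2 * p) - 1 / 2 := by
  have hpZ : (0 : ℤ) < p := by exact_mod_cast hp
  have hdiv := Int.mul_ediv_add_emod (t - 1) p
  have hs0 : (0 : ℝ) ≤ ((t - 1) % p : ℤ) := by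
    exact_mod_cast Int.emod_nonneg (t - 1) hpZ.ne'
  have hsp : (((t - 1) % p : ℤ) : ℝ) + 1 ≤ p := by
    exact_mod_cast Int.emod_lt_of_pos (t - 1) hpZ
  set q := (t - 1) / p
  set s := (t - 1) % p
  have hpR : (0 : ℝ) < p := by exact_mod_cast hp
  have hy0 : 0 < (2 * s + 1 : ℝ) / (2 * p) := by positivity
  have hy1 : (2 * s + 1 : ℝ) / (2 * p) < 1 := by
    rw [div_lt_one (by positivity)]
    linarith
  have hx : (2 * (t : ℝ) - 1) / (2 * p) = q + (2 * s + 1) / (2 * p) := by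
    rw [show (t : ℝ) = p * q + s + 1 by rw [← sub_eq_iff_eq_add]; exact_mod_cast hdiv.symm]
    field_simp
    ring
  rw [hx, dedekindSymbol_eq_of_lt_of_lt (n := q) (by linarith) (by linarith)]
  ring

theorem fourier_dedekind_symbol (p : ℕ) (hp : 1 < p) (t : ℤ) :
    (1 / (p : ℂ)) * ∑ ζ ∈ nontrivialRootsOfUnity p, ζ ^ t / (1 - ζ) =
      (dedekindSymbol ((2 * (t : ℝ) - 1) / (2 * (p : ℝ))) : ℂ) := by
  have hp0 : 0 < p := by omega
  have hsum := (Complex.isPrimitiveRoot_exp p hp0.ne').two_mul_sum_nthRootsFinset_erase_one_zpow_div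
    hp0 t
  have hpC : (p : ℂ) ≠ 0 := by exact_mod_cast hp0.ne'
  rw [dedekindSymbol_two_mul_sub_one_div hp0, nontrivialRootsOfUnity_eq_erase]
  push_cast
  field_simp
  linear_combination hsum
end

section
/- Let L be a finitely generated free abelian group with a nondegenerate symmetric bilinear form (·,·), and let k ∈ Hom(L,ℤ) be a characteristic element, i.e. (x,x) + k(x) ∈ 2ℤ for all x ∈ L. Then the map on the discriminant group D(L) = coker(i_L) given by [d] ↦ (1/2)(d+k, d)_ℚ mod ℤ is a well-defined quadratic function associated with the discriminant bilinear form b_{D(L)}. -/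
/-!
Extend the form to `(φ, d)_ℚ := φ(e)/n` whenever `n • d = B e` with `n ≠ 0`. Such a
representative exists for every `d`, since `B : L → L'` is injective between lattices of
equal rank, and the value does not depend on its choice. This pairing is bilinear and
symmetric and satisfies `(φ, B x)_ℚ = φ x`. Hence `q d = (d + k, d)_ℚ / 2` changes under
`d ↦ d + B x` by `d x + ((x, x) + k x) / 2 ∈ ℤ`, and its polarization is
`((d₁, d₂)_ℚ + (d₂, d₁)_ℚ) / 2 = (d₂, d₁)_ℚ`.
-/

open Module

theorem LinearMap.exists_smul_eq_apply_of_injective_of_finrank_eq {R M N : Type*} [CommRing R]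
    [IsDomain R] [AddCommGroup M] [Module R M] [AddCommGroup N] [Module R N] [Module.Finite R N]
    {f : M →ₗ[R] N} (hf : Function.Injective f) (h : finrank R M = finrank R N) (d : N) :
    ∃ n : R, n ≠ 0 ∧ ∃ e, n • d = f e := by
  have hquot : finrank R (N ⧸ LinearMap.range f) = 0 := by
    have := (LinearMap.range f).finrank_quotient_add_finrank
    rw [LinearMap.finrank_range_of_inj hf, h] at this
    omega
  obtain ⟨n, hn, hmem⟩ := Module.finrank_eq_zero_iff.1 hquot (Submodule.Quotient.mk d)
  rw [← Submodule.Quotient.mk_smul, Submodule.Quotient.mk_eq_zero] at hmem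
  obtain ⟨e, he⟩ := hmem
  exact ⟨n, hn, e, he.symm⟩

theorem AddCircle.coe_add_intCast {𝕜 : Type*} [AddCommGroupWithOne 𝕜] (x : 𝕜) (m : ℤ) :
    ((x + m : 𝕜) : AddCircle (1 : 𝕜)) = x := by
  rw [AddCircle.coe_add, add_eq_left, AddCircle.coe_eq_zero_iff]
  exact ⟨m, by simp⟩

section RatPairing

variable {L : Type*} [AddCommGroup L] [Module ℤ L] (B : L →ₗ[ℤ] L →ₗ[ℤ] ℤ)

open Classical in
/-- `ratPairing B φ d = φ (B⁻¹ d)`, computed in `L ⊗ ℚ`; junk value `0` if `d ∉ (B L) ⊗ ℚ`. -/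
noncomputable def ratPairing (φ d : Dual ℤ L) : ℚ :=
  if h : ∃ p : ℤ × L, p.1 ≠ 0 ∧ p.1 • d = B p.2 then φ h.choose.2 / h.choose.1 else 0

theorem ratPairing_add_left (φ ψ d : Dual ℤ L) :
    ratPairing B (φ + ψ) d = ratPairing B φ d + ratPairing B ψ d := by
  unfold ratPairing
  split_ifs
  · rw [LinearMap.add_apply, Int.cast_add, add_div]
  · rw [add_zero]

variable {B} (hB : Function.Injective B)
include hB

theorem ratPairing_eq_div (φ : Dual ℤ L) {d : Dual ℤ L} {n : ℤ} {e : L} (hn : n ≠ 0)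
    (he : n • d = B e) : ratPairing B φ d = φ e / n := by
  have hex : ∃ p : ℤ × L, p.1 ≠ 0 ∧ p.1 • d = B p.2 := ⟨(n, e), hn, he⟩
  obtain ⟨hm, hf⟩ := hex.choose_spec
  set m := hex.choose.1
  set f := hex.choose.2
  have hsmul : n • f = m • e := hB <| by rw [map_zsmul, map_zsmul, ← hf, ← he, smul_comm]
  have hφ : n * φ f = m * φ e := by simpa only [map_zsmul, smul_eq_mul] using congrArg φ hsmul
  have hφℚ : (n : ℚ) * φ f = m * φ e := by exact_mod_cast hφ
  rw [ratPairing, dif_pos hex, div_eq_div_iff (by exact_mod_cast hm) (by exact_mod_cast hn)]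
  linear_combination hφℚ

theorem ratPairing_apply_right (φ : Dual ℤ L) (x : L) : ratPairing B φ (B x) = φ x := by
  rw [ratPairing_eq_div hB φ one_ne_zero (one_smul ℤ (B x)), Int.cast_one, div_one]

variable [Module.Free ℤ L] [Module.Finite ℤ L]

theorem exists_smul_eq_of_injective (d : Dual ℤ L) : ∃ n : ℤ, n ≠ 0 ∧ ∃ e, n • d = B e :=
  LinearMap.exists_smul_eq_apply_of_injective_of_finrank_eq hB
    (Module.Free.chooseBasis ℤ L).toDualEquiv.finrank_eq d

theorem ratPairing_add_right (φ d₁ d₂ : Dual ℤ L) :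
    ratPairing B φ (d₁ + d₂) = ratPairing B φ d₁ + ratPairing B φ d₂ := by
  obtain ⟨n₁, hn₁, e₁, he₁⟩ := exists_smul_eq_of_injective hB d₁
  obtain ⟨n₂, hn₂, e₂, he₂⟩ := exists_smul_eq_of_injective hB d₂
  have he : (n₁ * n₂) • (d₁ + d₂) = B (n₂ • e₁ + n₁ • e₂) := by
    rw [smul_add, map_add, map_zsmul, map_zsmul, ← he₁, ← he₂, mul_smul, smul_comm n₁ n₂, mul_smul]
  rw [ratPairing_eq_div hB φ (mul_ne_zero hn₁ hn₂) he, ratPairing_eq_div hB φ hn₁ he₁,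
    ratPairing_eq_div hB φ hn₂ he₂, map_add, map_zsmul, map_zsmul, smul_eq_mul, smul_eq_mul]
  have hn₁ℚ : (n₁ : ℚ) ≠ 0 := by exact_mod_cast hn₁
  have hn₂ℚ : (n₂ : ℚ) ≠ 0 := by exact_mod_cast hn₂
  push_cast
  field_simp

variable (hsymm : ∀ x y : L, B x y = B y x)
include hsymm

theorem ratPairing_comm (d₁ d₂ : Dual ℤ L) : ratPairing B d₁ d₂ = ratPairing B d₂ d₁ := by
  obtain ⟨n₁, hn₁, e₁, he₁⟩ := exists_smul_eq_of_injective hB d₁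
  obtain ⟨n₂, hn₂, e₂, he₂⟩ := exists_smul_eq_of_injective hB d₂
  have hcross : n₁ * d₁ e₂ = n₂ * d₂ e₁ := by
    rw [← smul_eq_mul, ← LinearMap.smul_apply, he₁, ← smul_eq_mul, ← LinearMap.smul_apply, he₂,
      hsymm]
  rw [ratPairing_eq_div hB d₁ hn₂ he₂, ratPairing_eq_div hB d₂ hn₁ he₁,
    div_eq_div_iff (by exact_mod_cast hn₂) (by exact_mod_cast hn₁)]
  have hcrossℚ : (n₁ : ℚ) * d₁ e₂ = n₂ * d₂ e₁ := by exact_mod_cast hcross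
  linear_combination hcrossℚ

theorem ratPairing_apply_left (x : L) (d : Dual ℤ L) : ratPairing B (B x) d = d x := by
  rw [ratPairing_comm hB hsymm, ratPairing_apply_right hB]

end RatPairing

/-- Given a finitely generated free abelian group `L` with a nondegenerate symmetric
bilinear form `B`, and a characteristic element `k` of the dual lattice, the map
`[d] ↦ (1/2)(d+k,d)_ℚ mod ℤ` on the discriminant group `coker(i_L)` is a well-defined
quadratic function associated with the discriminant bilinear form.  The rational
extension of the form is encoded by representatives: if `n • d = B e` with `n ≠ 0`
then `(d₁, d)_ℚ = d₁(e)/n`. -/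
theorem discriminant_quadratic_function
    {L : Type*} [AddCommGroup L] [Module ℤ L] [Module.Free ℤ L] [Module.Finite ℤ L]
    (B : L →ₗ[ℤ] L →ₗ[ℤ] ℤ)
    (hsymm : ∀ x y : L, B x y = B y x)
    (hnd : ∀ x : L, (∀ y : L, B x y = 0) → x = 0)
    (k : Module.Dual ℤ L)
    (hchar : ∀ x : L, ∃ m : ℤ, B x x + k x = 2 * m) :
    ∃ q : Module.Dual ℤ L → AddCircle (1 : ℚ),
      -- the defining formula `q([d]) = (1/2)(d+k,d)_ℚ mod ℤ`
      (∀ (d : Module.Dual ℤ L) (e : L) (n : ℤ), n ≠ 0 → n • d = B e →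
        q d = (((d e + k e : ℤ) : ℚ) / (2 * (n : ℚ)) : ℚ)) ∧
      -- well-definedness on the discriminant group `coker(i_L)`
      (∀ (d : Module.Dual ℤ L) (x : L), q (d + B x) = q d) ∧
      -- `q` is a quadratic function associated with the discriminant bilinear form
      (∀ (d₁ d₂ : Module.Dual ℤ L) (e₁ : L) (n : ℤ), n ≠ 0 → n • d₁ = B e₁ →
        q (d₁ + d₂) - q d₁ - q d₂ = (((d₂ e₁ : ℤ) : ℚ) / (n : ℚ) : ℚ)) := by
  have hB : Function.Injective B :=
    (injective_iff_map_eq_zero B).2 fun x hx => hnd x fun y => by rw [hx, LinearMap.zero_apply]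
  have hadd := ratPairing_add_left B
  have haddr := ratPairing_add_right hB
  refine ⟨fun d => ((ratPairing B (d + k) d / 2 : ℚ) : AddCircle (1 : ℚ)), ?_, ?_, ?_⟩
  · intro d e n hn he
    dsimp only
    rw [ratPairing_eq_div hB _ hn he, LinearMap.add_apply, Int.cast_add, div_div, mul_comm]
  · intro d x
    obtain ⟨m, hm⟩ := hchar x
    have hshift : ratPairing B (d + B x + k) (d + B x) / 2
        = ratPairing B (d + k) d / 2 + (d x + m : ℤ) := by
      have hm' : (B x x : ℚ) + k x = 2 * m := by exact_mod_cast hm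
      rw [add_right_comm d, hadd, haddr, haddr, ratPairing_apply_right hB,
        ratPairing_apply_right hB, ratPairing_apply_left hB hsymm, LinearMap.add_apply]
      push_cast
      linear_combination hm' / 2
    simp only [hshift, AddCircle.coe_add_intCast]
  · intro d₁ d₂ e₁ n hn he₁
    dsimp only
    have hpolar : ratPairing B (d₁ + d₂ + k) (d₁ + d₂) / 2 - ratPairing B (d₁ + k) d₁ / 2
        - ratPairing B (d₂ + k) d₂ / 2 = ratPairing B d₂ d₁ := by
      rw [add_right_comm d₁, hadd, hadd, hadd, hadd, haddr, haddr, haddr,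
        ratPairing_comm hB hsymm d₁ d₂]
      ring
    rw [← AddCircle.coe_sub, ← AddCircle.coe_sub, hpolar, ratPairing_eq_div hB d₂ hn he₁]
end

section
/- Let n ≥ 3 and let a₁, …, aₙ ≥ 2 be integers. Define α_i = a / lcm(a_j : j ≠ i) where a = lcm(a₁,…,aₙ), s_i = (Π_{j≠i} a_j)/lcm(a_j : j ≠ i), and g = (1/2)(2 + (n−2)·(Π a_j)/a − Σ_i s_i). Suppose d_{ijk} := gcd(a_i,a_j,a_k) = 1 for all triples of distinct indices, and g = 0. Then, writing d_{ik} = gcd(a_i,a_k) for i ≠ k, the integers d_{ik} satisfy: 2 + (n−2)·Π_{i<k} d_{ik} − Σ_{j=1}^n Π_{i<k, i,k≠j} d_{ik} = 0. -/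
/-!
When no three of the `aᵢ` share a factor, `∏_{i ∈ S} aᵢ = lcm(aᵢ : i ∈ S) · ∏_{i<k in S} gcd(aᵢ, aₖ)`
for every index set `S`; applied to the whole index set and to each `{j ≠ i}`, this turns `g = 0`
into the stated equation. The identity follows by adding the largest index `x` last:
`aₓ · lcm S = lcm(aₓ, lcm S) · gcd(lcm S, aₓ)`, and since the `gcd(aᵢ, aₓ)` are pairwise coprime,
`gcd(lcm S, aₓ) = ∏_{i ∈ S} gcd(aᵢ, aₓ)` by distributivity of `gcd` over `lcm`.
-/

open Finset

namespace Nat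

theorem gcd_lcm_eq_lcm_gcd (m n k : ℕ) : gcd (lcm m n) k = lcm (gcd m k) (gcd n k) := by
  rcases eq_or_ne m 0 with rfl | hm
  · simp [lcm_eq_left, gcd_dvd_right]
  rcases eq_or_ne n 0 with rfl | hn
  · simp [lcm_eq_right, gcd_dvd_right]
  rcases eq_or_ne k 0 with rfl | hk
  · simp
  have hmk : gcd m k ≠ 0 := gcd_ne_zero_right hk
  have hnk : gcd n k ≠ 0 := gcd_ne_zero_right hk
  refine factorization_inj (gcd_ne_zero_right hk) (lcm_ne_zero hmk hnk) ?_
  ext p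
  simp [factorization_gcd, factorization_lcm, hm, hn, hk, hmk, hnk, inf_sup_right]

theorem gcd_gcd_gcd_right (a b c : ℕ) : gcd (gcd a c) (gcd b c) = gcd (gcd a b) c := by
  rw [gcd_assoc a c, ← gcd_assoc c b c, gcd_comm c b, gcd_assoc b c c, gcd_self, ← gcd_assoc]

end Nat

theorem Finset.gcd_lcm_eq_prod_gcd {ι : Type*} [DecidableEq ι] (f : ι → ℕ) (y : ℕ) (S : Finset ι)
    (hS : (S : Set ι).Pairwise fun i j => Nat.Coprime (Nat.gcd (f i) y) (Nat.gcd (f j) y)) :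
    Nat.gcd (S.lcm f) y = ∏ i ∈ S, Nat.gcd (f i) y := by
  induction S using Finset.induction_on with
  | empty => simp
  | @insert x S hx ih =>
    rw [coe_insert, Set.pairwise_insert] at hS
    rw [lcm_insert, prod_insert hx, lcm_eq_nat_lcm, Nat.gcd_lcm_eq_lcm_gcd, ih hS.1]
    refine Nat.Coprime.lcm_eq_mul (Nat.Coprime.prod_right fun i hi => (hS.2 i hi ?_).1)
    rintro rfl
    exact hx hi

section PairGcdProd

variable {ι : Type*} [LinearOrder ι] (f : ι → ℕ)

def pairGcdProd (S : Finset ι) : ℕ :=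
  ∏ p ∈ (S ×ˢ S).filter (fun p => p.1 < p.2), Nat.gcd (f p.1) (f p.2)

theorem pairGcdProd_eq_prod_prod (S : Finset ι) :
    pairGcdProd f S = ∏ j ∈ S, ∏ i ∈ S with i < j, Nat.gcd (f i) (f j) := by
  simp only [pairGcdProd, prod_filter, prod_product_right]

theorem pairGcdProd_insert_of_forall_lt {S : Finset ι} {x : ι} (hx : ∀ i ∈ S, i < x) :
    pairGcdProd f (insert x S) = (∏ i ∈ S, Nat.gcd (f i) (f x)) * pairGcdProd f S := by
  have hxS : x ∉ S := fun h => lt_irrefl x (hx x h)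
  have below_x : (insert x S).filter (· < x) = S := by
    rw [filter_insert, if_neg (lt_irrefl x), filter_true_of_mem hx]
  have below_j : ∀ j ∈ S, (insert x S).filter (· < j) = S.filter (· < j) := fun j hj => by
    rw [filter_insert, if_neg (hx j hj).not_gt]
  rw [pairGcdProd_eq_prod_prod, pairGcdProd_eq_prod_prod, prod_insert hxS, below_x]
  exact congrArg _ (prod_congr rfl fun j hj => by rw [below_j j hj])

theorem prod_eq_lcm_mul_pairGcdProd
    (hf : ∀ i j k, i ≠ j → j ≠ k → i ≠ k → Nat.gcd (Nat.gcd (f i) (f j)) (f k) = 1)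
    (S : Finset ι) : ∏ i ∈ S, f i = S.lcm f * pairGcdProd f S := by
  induction S using Finset.induction_on_max with
  | empty => simp [pairGcdProd]
  | insert x S hx ih =>
    have hxS : x ∉ S := fun h => lt_irrefl x (hx x h)
    have hgcd : Nat.gcd (S.lcm f) (f x) = ∏ i ∈ S, Nat.gcd (f i) (f x) := by
      refine S.gcd_lcm_eq_prod_gcd f (f x) fun i hi j hj hij => ?_
      exact (Nat.gcd_gcd_gcd_right _ _ _).trans (hf i j x hij (hx j hj).ne (hx i hi).ne)
    calc ∏ i ∈ insert x S, f i = f x * S.lcm f * pairGcdProd f S := by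
          rw [prod_insert hxS, ih, mul_assoc]
      _ = Nat.lcm (f x) (S.lcm f) * Nat.gcd (S.lcm f) (f x) * pairGcdProd f S := by
          rw [Nat.gcd_comm, mul_comm (Nat.lcm _ _), Nat.gcd_mul_lcm]
      _ = (insert x S).lcm f * pairGcdProd f (insert x S) := by
          rw [pairGcdProd_insert_of_forall_lt f hx, lcm_insert, lcm_eq_nat_lcm, hgcd, mul_assoc]

theorem pairGcdProd_univ [Fintype ι] :
    pairGcdProd f univ =
      ∏ p ∈ univ.filter (fun p : ι × ι => p.1 < p.2), Nat.gcd (f p.1) (f p.2) := by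
  rw [pairGcdProd, univ_product_univ]

theorem pairGcdProd_univ_erase [Fintype ι] (j : ι) :
    pairGcdProd f (univ.erase j) =
      ∏ p ∈ univ.filter (fun p : ι × ι => p.1 < p.2 ∧ p.1 ≠ j ∧ p.2 ≠ j),
        Nat.gcd (f p.1) (f p.2) := by
  unfold pairGcdProd
  congr 1
  ext p
  simp only [mem_filter, mem_product, mem_erase, mem_univ, and_true]
  tauto

end PairGcdProd

theorem brieskorn_genus_zero_equation_general (n : ℕ) (a : Fin n → ℕ)
    (ha : ∀ i, 2 ≤ a i)
    (htriple : ∀ i j k : Fin n, i ≠ j → j ≠ k → i ≠ k →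
      Nat.gcd (Nat.gcd (a i) (a j)) (a k) = 1)
    -- the genus `g = (1/2)(2 + (n-2)·A/a − Σᵢ sᵢ)` vanishes:
    (hg : 2 + ((n : ℚ) - 2) * ((∏ j, a j : ℕ) : ℚ) / ((univ.lcm a : ℕ) : ℚ)
        - ∑ i, ((∏ j ∈ univ.erase i, a j : ℕ) : ℚ) / (((univ.erase i).lcm a : ℕ) : ℚ) = 0) :
    (2 : ℤ) + ((n : ℤ) - 2) *
        ∏ p ∈ univ.filter (fun p : Fin n × Fin n => p.1 < p.2), (Nat.gcd (a p.1) (a p.2) : ℤ)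
      - ∑ j, ∏ p ∈ univ.filter (fun p : Fin n × Fin n => p.1 < p.2 ∧ p.1 ≠ j ∧ p.2 ≠ j),
          (Nat.gcd (a p.1) (a p.2) : ℤ) = 0 := by
  have hquot : ∀ S : Finset (Fin n),
      ((∏ j ∈ S, a j : ℕ) : ℚ) / ((S.lcm a : ℕ) : ℚ) = pairGcdProd a S := by
    intro S
    have hlcm : S.lcm a ≠ 0 := Finset.lcm_ne_zero_iff.mpr fun i _ => by have := ha i; omega
    rw [prod_eq_lcm_mul_pairGcdProd a htriple S, Nat.cast_mul,
      mul_div_cancel_left₀ _ (Nat.cast_ne_zero.mpr hlcm)]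
  rw [mul_div_assoc, hquot] at hg
  simp only [hquot] at hg
  simp only [← Nat.cast_prod, ← pairGcdProd_univ, ← pairGcdProd_univ_erase]
  rw [← Int.cast_eq_zero (α := ℚ)]
  push_cast
  exact hg

theorem brieskorn_genus_zero_equation (n : ℕ) (hn : 3 ≤ n) (a : Fin n → ℕ)
    (ha : ∀ i, 2 ≤ a i)
    (htriple : ∀ i j k : Fin n, i ≠ j → j ≠ k → i ≠ k →
      Nat.gcd (Nat.gcd (a i) (a j)) (a k) = 1)
    -- the genus `g = (1/2)(2 + (n-2)·A/a − Σᵢ sᵢ)` vanishes: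
    (hg : 2 + ((n : ℚ) - 2) * ((∏ j, a j : ℕ) : ℚ) / ((univ.lcm a : ℕ) : ℚ)
        - ∑ i, ((∏ j ∈ univ.erase i, a j : ℕ) : ℚ) / (((univ.erase i).lcm a : ℕ) : ℚ) = 0) :
    (2 : ℤ) + ((n : ℤ) - 2) *
        ∏ p ∈ univ.filter (fun p : Fin n × Fin n => p.1 < p.2), (Nat.gcd (a p.1) (a p.2) : ℤ)
      - ∑ j, ∏ p ∈ univ.filter (fun p : Fin n × Fin n => p.1 < p.2 ∧ p.1 ≠ j ∧ p.2 ≠ j),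
          (Nat.gcd (a p.1) (a p.2) : ℤ) = 0 :=
  brieskorn_genus_zero_equation_general n a ha htriple hg
end

section
/- The equation 2 + (n−2)·Π_{i<k} d_{ik} − Σ_{j=1}^n Π_{i<k; i,k≠j} d_{ik} = 0, where the indices run over pairs from {1,…,n} with n ≥ 3 and all d_{ik} are positive integers, admits only solutions in which at most one d_{ik} is strictly greater than 1 (all others equal 1). -/
open Finset

lemma arith_core (x y z : ℤ) (hx : 2 ≤ x) (hy : 2 ≤ y) (hz : 1 ≤ z) :
    x + y + z < 2 + x * y * z := by
  nlinarith [mul_nonneg (mul_nonneg (by linarith : (0:ℤ) ≤ x - 1) (by linarith : (0:ℤ) ≤ y - 1))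
      (by linarith : (0:ℤ) ≤ z - 1),
    mul_nonneg (by linarith : (0:ℤ) ≤ x - 1) (by linarith : (0:ℤ) ≤ z - 1),
    mul_nonneg (by linarith : (0:ℤ) ≤ y - 1) (by linarith : (0:ℤ) ≤ z - 1),
    mul_le_mul (by linarith : (1:ℤ) ≤ x - 1) (by linarith : (1:ℤ) ≤ y - 1)
      (by linarith) (by linarith)]

lemma arith3 (x y z : ℕ) (h1 : 1 ≤ x) (h2 : 1 ≤ y) (h3 : 1 ≤ z)
    (h : 2 ≤ x ∧ 2 ≤ y ∨ 2 ≤ x ∧ 2 ≤ z ∨ 2 ≤ y ∧ 2 ≤ z) :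
    x + y + z ≠ 2 + x * y * z := by
  intro heq
  have hq : (x:ℤ) + y + z = 2 + x * y * z := by exact_mod_cast heq
  have hx1 : (1:ℤ) ≤ x := by exact_mod_cast h1
  have hy1 : (1:ℤ) ≤ y := by exact_mod_cast h2
  have hz1 : (1:ℤ) ≤ z := by exact_mod_cast h3
  rcases h with ⟨ha, hb⟩ | ⟨ha, hb⟩ | ⟨ha, hb⟩
  · have := arith_core (x:ℤ) y z (by exact_mod_cast ha) (by exact_mod_cast hb) hz1
    linarith
  · have := arith_core (x:ℤ) z y (by exact_mod_cast ha) (by exact_mod_cast hb) hy1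
    nlinarith
  · have := arith_core (y:ℤ) z x (by exact_mod_cast ha) (by exact_mod_cast hb) hx1
    nlinarith

lemma pair_eq {α : Type*} [DecidableEq α] [LinearOrder α] {p q : α × α} (hp : p.1 < p.2) (hq : q.1 < q.2)
    (h : ({p.1, p.2} : Finset α) = {q.1, q.2}) : p = q := by
  have h1 : q.1 = p.1 ∨ q.1 = p.2 := by
    have : q.1 ∈ ({p.1, p.2} : Finset α) := by rw [h]; simp
    simpa using this
  have h2 : q.2 = p.1 ∨ q.2 = p.2 := by
    have : q.2 ∈ ({p.1, p.2} : Finset α) := by rw [h]; simp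
    simpa using this
  rcases h1 with h1 | h1 <;> rcases h2 with h2 | h2
  · rw [h1, h2] at hq; exact absurd hq (lt_irrefl _)
  · exact (Prod.ext h1 h2).symm
  · rw [h1, h2] at hq; exact absurd hq (lt_asymm hp)
  · rw [h1, h2] at hq; exact absurd hq (lt_irrefl _)

set_option maxHeartbeats 1000000 in
/-- The equation `2 + (n−2)·Π_{i<k} d_{ik} − Σ_j Π_{i<k; i,k≠j} d_{ik} = 0` in positive
integers admits only solutions with at most one `d_{ik}` strictly greater than `1`. -/
theorem at_most_one_nontrivial_solution (n : ℕ) (hn : 3 ≤ n)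
    (d : Fin n × Fin n → ℕ) (hd : ∀ p, 0 < d p)
    (heq : (2 : ℤ) + ((n : ℤ) - 2) *
        ∏ p ∈ univ.filter (fun p : Fin n × Fin n => p.1 < p.2), (d p : ℤ)
      - ∑ j, ∏ p ∈ univ.filter (fun p : Fin n × Fin n => p.1 < p.2 ∧ p.1 ≠ j ∧ p.2 ≠ j),
          (d p : ℤ) = 0) :
    ∀ p ∈ univ.filter (fun p : Fin n × Fin n => p.1 < p.2),
      ∀ q ∈ univ.filter (fun q : Fin n × Fin n => q.1 < q.2),
        1 < d p → 1 < d q → p = q := by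
  intro p hp q hq hdp hdq
  by_contra hpq
  rw [mem_filter] at hp hq
  have hp2 : p.1 < p.2 := hp.2
  have hq2 : q.1 < q.2 := hq.2
  have hn2 : (2:ℕ) ≤ n := by omega
  have hKey : ∑ j, ∏ r ∈ univ.filter (fun r : Fin n × Fin n => r.1 < r.2 ∧ r.1 ≠ j ∧ r.2 ≠ j), d r
      = 2 + (n - 2) * ∏ r ∈ univ.filter (fun r : Fin n × Fin n => r.1 < r.2), d r := by
    have hZ : ((∑ j, ∏ r ∈ univ.filter (fun r : Fin n × Fin n => r.1 < r.2 ∧ r.1 ≠ j ∧ r.2 ≠ j), d r : ℕ) : ℤ)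
        = ((2 + (n-2) * ∏ r ∈ univ.filter (fun r : Fin n × Fin n => r.1 < r.2), d r : ℕ) : ℤ) := by
      push_cast [Nat.cast_sub hn2]
      linarith [heq]
    exact_mod_cast hZ
  set N : Finset (Fin n × Fin n) := univ.filter (fun r : Fin n × Fin n => r.1 < r.2) with hNdef
  set A : Fin n → Finset (Fin n × Fin n) :=
    fun j => univ.filter (fun r : Fin n × Fin n => r.1 < r.2 ∧ r.1 ≠ j ∧ r.2 ≠ j) with hAdef
  set P : ℕ := ∏ r ∈ N, d r with hPdef
  set Pn : Fin n → ℕ := fun j => ∏ r ∈ A j, d r with hPndef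
  have hAN : ∀ j, A j ⊆ N := by
    intro j r hr
    simp only [hAdef, hNdef, mem_filter, mem_univ, true_and] at hr ⊢
    exact hr.1
  have hPn_le : ∀ j, Pn j ≤ P :=
    fun j => Finset.prod_le_prod_of_subset_of_one_le' (hAN j) (fun i _ _ => hd i)
  have hP1 : 1 ≤ P := Finset.one_le_prod' (fun i _ => hd i)
  set T : Finset (Fin n × Fin n) := N.filter (fun r => 2 ≤ d r) with hTdef
  have hTN : T ⊆ N := filter_subset _ _
  have hpT : p ∈ T := mem_filter.mpr ⟨mem_filter.mpr ⟨mem_univ _, hp2⟩, hdp⟩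
  have hqT : q ∈ T := mem_filter.mpr ⟨mem_filter.mpr ⟨mem_univ _, hq2⟩, hdq⟩
  set V : Finset (Fin n) := T.biUnion (fun r => {r.1, r.2}) with hVdef
  have hmemV : ∀ r ∈ T, r.1 ∈ V ∧ r.2 ∈ V := by
    intro r hr
    constructor <;> exact mem_biUnion.mpr ⟨r, hr, by simp⟩
  have hVT : ∀ j ∈ V, ∃ r ∈ T, j = r.1 ∨ j = r.2 := by
    intro j hj
    rcases mem_biUnion.mp hj with ⟨r, hr, hjr⟩
    exact ⟨r, hr, by simpa using hjr⟩
  have h2Pn : ∀ j ∈ V, 2 * Pn j ≤ P := by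
    intro j hj
    obtain ⟨r, hrT, hjr⟩ := hVT j hj
    have hrN : r ∈ N := hTN hrT
    have hrA : r ∉ A j := by
      simp only [hAdef, mem_filter, mem_univ, true_and]
      rintro ⟨-, h1, h2⟩
      rcases hjr with h | h
      · exact h1 h.symm
      · exact h2 h.symm
    have hsd : (∏ i ∈ N \ A j, d i) * Pn j = P := Finset.prod_sdiff (hAN j)
    have hdr : d r ≤ ∏ i ∈ N \ A j, d i :=
      Finset.single_le_prod' (fun i _ => hd i) (mem_sdiff.mpr ⟨hrN, hrA⟩)
    have h2r : 2 ≤ d r := (mem_filter.mp hrT).2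
    calc 2 * Pn j ≤ (∏ i ∈ N \ A j, d i) * Pn j :=
          Nat.mul_le_mul_right _ (le_trans h2r hdr)
      _ = P := hsd
  have hcardV : V.card ≤ n := by
    have := card_le_card (subset_univ V)
    simpa using this
  rcases le_or_gt 4 V.card with hV4 | hV4
  · -- at least 4 covered vertices : contradiction
    have hsplit : ∑ j ∈ univ \ V, (2 * Pn j) + ∑ j ∈ V, (2 * Pn j) = ∑ j, 2 * Pn j :=
      Finset.sum_sdiff (subset_univ V)
    have hb1 : ∑ j ∈ V, 2 * Pn j ≤ V.card * P := by
      calc ∑ j ∈ V, 2 * Pn j ≤ ∑ j ∈ V, P := Finset.sum_le_sum (fun j hj => h2Pn j hj)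
        _ = V.card * P := by rw [Finset.sum_const, smul_eq_mul]
    have hb2 : ∑ j ∈ univ \ V, 2 * Pn j ≤ (n - V.card) * (2 * P) := by
      calc ∑ j ∈ univ \ V, 2 * Pn j ≤ ∑ j ∈ univ \ V, 2 * P :=
            Finset.sum_le_sum (fun j _ => Nat.mul_le_mul_left _ (hPn_le j))
        _ = (univ \ V).card * (2 * P) := by rw [Finset.sum_const, smul_eq_mul]
        _ = (n - V.card) * (2 * P) := by
            rw [card_sdiff_of_subset (subset_univ V), card_univ, Fintype.card_fin]
    have htot : ∑ j, 2 * Pn j = 2 * (2 + (n-2) * P) := by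
      rw [← Finset.mul_sum, hKey]
    have hfin : 2 * (2 + (n-2) * P) ≤ (n - V.card) * (2 * P) + V.card * P := by
      rw [← htot, ← hsplit]
      exact Nat.add_le_add hb2 hb1
    have h4m : (4:ℤ) ≤ (V.card : ℤ) := by exact_mod_cast hV4
    have hPz : (1:ℤ) ≤ (P : ℤ) := by exact_mod_cast hP1
    have hfz : (2:ℤ) * (2 + ((n:ℤ)-2) * P) ≤ ((n:ℤ) - V.card) * (2 * P) + V.card * P := by
      have := hfin
      zify [hn2, hcardV] at this
      exact this
    nlinarith [mul_le_mul_of_nonneg_right h4m (by linarith : (0:ℤ) ≤ (P:ℤ))]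
  · -- at most 3 covered vertices
    have hsubp : ({p.1, p.2} : Finset (Fin n)) ⊆ V := by
      intro x hx
      simp only [mem_insert, mem_singleton] at hx
      rcases hx with rfl | rfl
      · exact (hmemV p hpT).1
      · exact (hmemV p hpT).2
    have hsubq : ({q.1, q.2} : Finset (Fin n)) ⊆ V := by
      intro x hx
      simp only [mem_insert, mem_singleton] at hx
      rcases hx with rfl | rfl
      · exact (hmemV q hqT).1
      · exact (hmemV q hqT).2
    have hcp : ({p.1, p.2} : Finset (Fin n)).card = 2 := card_pair (ne_of_lt hp2)
    have hcq : ({q.1, q.2} : Finset (Fin n)).card = 2 := card_pair (ne_of_lt hq2)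
    have hV3 : V.card = 3 := by
      by_contra hne3
      have hle2 : V.card ≤ 2 := by omega
      have e1 : ({p.1, p.2} : Finset (Fin n)) = V :=
        eq_of_subset_of_card_le hsubp (by omega)
      have e2 : ({q.1, q.2} : Finset (Fin n)) = V :=
        eq_of_subset_of_card_le hsubq (by omega)
      exact hpq (pair_eq hp2 hq2 (e1.trans e2.symm))
    set S : Fin n → Finset (Fin n × Fin n) :=
      fun j => T.filter (fun r => r.1 ≠ j ∧ r.2 ≠ j) with hSdef
    set x : Fin n → ℕ := fun j => ∏ r ∈ S j, d r with hxdef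
    have havoid : ∀ r ∈ T, ∃ j ∈ V, j ≠ r.1 ∧ j ≠ r.2 := by
      intro r hr
      by_contra hcon
      push_neg at hcon
      have hsub : V ⊆ {r.1, r.2} := by
        intro j hj
        simp only [mem_insert, mem_singleton]
        by_contra hj2
        push_neg at hj2
        exact absurd hj2.2 (not_not.mpr (hcon j hj hj2.1))
      have := card_le_card hsub
      have h2 : ({r.1, r.2} : Finset (Fin n)).card ≤ 2 := card_insert_le _ _ |>.trans (by simp)
      omega
    have hTone : ∀ r ∈ N, r ∉ T → d r = 1 := by
      intro r hrN hrT
      have h1 := hd r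
      have h2 : ¬ 2 ≤ d r := fun hh => hrT (mem_filter.mpr ⟨hrN, hh⟩)
      omega
    have hPT : ∏ r ∈ T, d r = P := Finset.prod_subset hTN hTone
    have F1a : ∀ j, j ∉ V → Pn j = P := by
      intro j hj
      have hTA : T ⊆ A j := by
        intro r hr
        obtain ⟨h1, h2⟩ := hmemV r hr
        have hrN : r ∈ N := hTN hr
        simp only [hNdef, mem_filter, mem_univ, true_and] at hrN
        simp only [hAdef, mem_filter, mem_univ, true_and]
        exact ⟨hrN, fun e => hj (e ▸ h1), fun e => hj (e ▸ h2)⟩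
      have e1 : ∏ r ∈ T, d r = Pn j :=
        Finset.prod_subset hTA (fun r hr hrT => hTone r (hAN j hr) hrT)
      rw [← e1, hPT]
    have F1b : ∀ j ∈ V, Pn j = x j := by
      intro j hj
      have hSA : S j ⊆ A j := by
        intro r hr
        simp only [hSdef, mem_filter] at hr
        have hrN : r ∈ N := hTN hr.1
        simp only [hNdef, mem_filter, mem_univ, true_and] at hrN
        simp only [hAdef, mem_filter, mem_univ, true_and]
        exact ⟨hrN, hr.2⟩
      have e1 : ∏ r ∈ S j, d r = Pn j := by
        apply Finset.prod_subset hSA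
        intro r hrA hrS
        apply hTone r (hAN j hrA)
        intro hrT
        apply hrS
        simp only [hAdef, mem_filter, mem_univ, true_and] at hrA
        exact mem_filter.mpr ⟨hrT, hrA.2⟩
      rw [← e1]
    have hx1 : ∀ j, 1 ≤ x j := fun j => Finset.one_le_prod' (fun i _ => hd i)
    -- product of the x over V equals P
    have hdisj : (V : Set (Fin n)).PairwiseDisjoint S := by
      intro a ha b hb hab
      simp only [Function.onFun]
      rw [Finset.disjoint_left]
      intro r hra hrb
      simp only [hSdef, mem_filter] at hra hrb
      obtain ⟨h1, h2⟩ := hmemV r hra.1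
      have hr12 : r.1 ≠ r.2 := by
        have := hTN hra.1
        simp only [hNdef, mem_filter, mem_univ, true_and] at this
        exact ne_of_lt this
      have hsub4 : ({a, b, r.1, r.2} : Finset (Fin n)) ⊆ V := by
        intro y hy
        simp only [mem_insert, mem_singleton] at hy
        rcases hy with rfl | rfl | rfl | rfl
        · simpa using ha
        · simpa using hb
        · exact h1
        · exact h2
      have hc4 : ({a, b, r.1, r.2} : Finset (Fin n)).card = 4 := by
        rw [card_insert_of_notMem, card_insert_of_notMem, card_pair hr12]
        · simp only [mem_insert, mem_singleton]
          push_neg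
          exact ⟨(hrb.2.1).symm, (hrb.2.2).symm⟩
        · simp only [mem_insert, mem_singleton]
          push_neg
          exact ⟨hab, (hra.2.1).symm, (hra.2.2).symm⟩
      have := card_le_card hsub4
      omega
    have hUnion : V.biUnion S = T := by
      apply Finset.Subset.antisymm
      · intro r hr
        rcases mem_biUnion.mp hr with ⟨j, hj, hrj⟩
        exact (mem_filter.mp hrj).1
      · intro r hr
        obtain ⟨j, hjV, hj1, hj2⟩ := havoid r hr
        exact mem_biUnion.mpr ⟨j, hjV, mem_filter.mpr ⟨hr, hj1.symm, hj2.symm⟩⟩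
    have F2 : ∏ j ∈ V, x j = P := by
      calc ∏ j ∈ V, x j = ∏ r ∈ V.biUnion S, d r := (Finset.prod_biUnion hdisj).symm
        _ = ∏ r ∈ T, d r := by rw [hUnion]
        _ = P := hPT
    -- the sum equation restricted to V
    have hsumV : ∑ j ∈ V, x j = 2 + P := by
      have hsplit : ∑ j ∈ univ \ V, Pn j + ∑ j ∈ V, Pn j = ∑ j, Pn j :=
        Finset.sum_sdiff (subset_univ V)
      have e1 : ∑ j ∈ univ \ V, Pn j = (n - 3) * P := by
        rw [Finset.sum_congr rfl (fun j hj => F1a j (mem_sdiff.mp hj).2), Finset.sum_const,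
          smul_eq_mul, card_sdiff_of_subset (subset_univ V), card_univ, Fintype.card_fin, hV3]
      have e2 : ∑ j ∈ V, Pn j = ∑ j ∈ V, x j := Finset.sum_congr rfl F1b
      have e3 : ∑ j, Pn j = 2 + (n - 2) * P := hKey
      rw [e1, e2, e3] at hsplit
      have hnP : (n - 2) * P = (n - 3) * P + P := by
        have h : n - 2 = (n - 3) + 1 := by omega
        rw [h]; ring
      rw [hnP] at hsplit
      omega
    -- extract the two avoided vertices
    obtain ⟨jp, hjpV, hjp1, hjp2⟩ := havoid p hpT
    obtain ⟨jq, hjqV, hjq1, hjq2⟩ := havoid q hqT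
    have hxp : 2 ≤ x jp := le_trans hdp
      (Finset.single_le_prod' (fun i _ => hd i)
        (mem_filter.mpr ⟨hpT, hjp1.symm, hjp2.symm⟩))
    have hxq : 2 ≤ x jq := le_trans hdq
      (Finset.single_le_prod' (fun i _ => hd i)
        (mem_filter.mpr ⟨hqT, hjq1.symm, hjq2.symm⟩))
    have hjne : jp ≠ jq := by
      rintro rfl
      have e1 : ({p.1, p.2} : Finset (Fin n)) = V.erase jp := by
        apply eq_of_subset_of_card_le
        · intro y hy
          simp only [mem_insert, mem_singleton] at hy
          rcases hy with rfl | rfl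
          · exact mem_erase.mpr ⟨hjp1.symm, (hmemV p hpT).1⟩
          · exact mem_erase.mpr ⟨hjp2.symm, (hmemV p hpT).2⟩
        · rw [card_erase_of_mem hjpV, hV3, hcp]
      have e2 : ({q.1, q.2} : Finset (Fin n)) = V.erase jp := by
        apply eq_of_subset_of_card_le
        · intro y hy
          simp only [mem_insert, mem_singleton] at hy
          rcases hy with rfl | rfl
          · exact mem_erase.mpr ⟨hjq1.symm, (hmemV q hqT).1⟩
          · exact mem_erase.mpr ⟨hjq2.symm, (hmemV q hqT).2⟩
        · rw [card_erase_of_mem hjqV, hV3, hcq]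
      exact hpq (pair_eq hp2 hq2 (e1.trans e2.symm))
    obtain ⟨a, b, c, hab, hac, hbc, hVabc⟩ := Finset.card_eq_three.mp hV3
    have hnotb : b ∉ ({c} : Finset (Fin n)) := by simp [hbc]
    have hnota : a ∉ ({b, c} : Finset (Fin n)) := by simp [hab, hac]
    have hsum3 : x a + x b + x c = 2 + x a * x b * x c := by
      have hs : ∑ j ∈ V, x j = x a + (x b + x c) := by
        rw [hVabc, Finset.sum_insert hnota, Finset.sum_insert hnotb, Finset.sum_singleton]
      have hpr : ∏ j ∈ V, x j = x a * (x b * x c) := by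
        rw [hVabc, Finset.prod_insert hnota, Finset.prod_insert hnotb, Finset.prod_singleton]
      rw [hs] at hsumV
      rw [hpr] at F2
      rw [← F2] at hsumV
      linarith [hsumV]
    have hjpV' : jp = a ∨ jp = b ∨ jp = c := by
      rw [hVabc] at hjpV; simpa using hjpV
    have hjqV' : jq = a ∨ jq = b ∨ jq = c := by
      rw [hVabc] at hjqV; simpa using hjqV
    apply arith3 (x a) (x b) (x c) (hx1 a) (hx1 b) (hx1 c) _ hsum3
    rcases hjpV' with rfl | rfl | rfl <;> rcases hjqV' with rfl | rfl | rfl <;>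
      first
        | exact absurd rfl hjne
        | exact Or.inl ⟨hxp, hxq⟩
        | exact Or.inl ⟨hxq, hxp⟩
        | exact Or.inr (Or.inl ⟨hxp, hxq⟩)
        | exact Or.inr (Or.inl ⟨hxq, hxp⟩)
        | exact Or.inr (Or.inr ⟨hxp, hxq⟩)
        | exact Or.inr (Or.inr ⟨hxq, hxp⟩)
end
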